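/- No-go theorem for isotropy: let d ≥ 2 and let (G, δ) be a displacement graph in dimension d with G strongly connected. Then the set of velocities of trajectories of (G, δ) is never ellipsoidal: there is no invertible linear map L : ℝ^d → ℝ^d and no real r > 0 such that the image under L of the set of velocities equals the closed Euclidean ball {u ∈ ℝ^d : ‖u‖₂ ≤ r}. -/

import Mathlib

/-- A path in a directed multigraph with source map `s` and target map `t`:
a nonempty list of edges `e₁ … e_n` with `t eᵢ = s eᵢ₊₁`. -/
def IsPathList {V E : Type*} (s t : E → V) (p : List E) : Prop :=
  p ≠ [] ∧ p.Chain' (fun e f => t e = s f)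

/-- A cycle: a path `e₁ … e_n` with `s e₁ = t e_n` whose vertices
`s e₁, …, s e_n` are pairwise distinct. -/
def IsCycleList {V E : Type*} (s t : E → V) (p : List E) : Prop :=
  ∃ h : p ≠ [], p.Chain' (fun e f => t e = s f) ∧
    s (p.head h) = t (p.getLast h) ∧ (p.map s).Nodup

/-- Regard a vector of `ℤ^d` as a point of Euclidean space `ℝ^d`. -/
def toR {d : ℕ} (x : Fin d → ℤ) : EuclideanSpace ℝ (Fin d) := WithLp.toLp 2 (fun i => (x i : ℝ))

/-- A trajectory: a sequence of edges with `s (f (n+1)) = t (f n)`. -/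
def IsTrajectory {V E : Type*} (s t : E → V) (f : ℕ → E) : Prop :=
  ∀ n : ℕ, s (f (n + 1)) = t (f n)

/-- `u` is the velocity of the trajectory `f`:
`(1/n) · ∑_{k=1}^n δ(f k) → u` as `n → ∞`. -/
def HasVelocity {d : ℕ} {E : Type*} (δ : E → Fin d → ℤ) (f : ℕ → E)
    (u : EuclideanSpace ℝ (Fin d)) : Prop :=
  Filter.Tendsto (fun n : ℕ => (n : ℝ)⁻¹ • ∑ k ∈ Finset.Icc 1 n, toR (δ (f k)))
    Filter.atTop (nhds u)

/-- The set of basic velocities `δ(c)/|c|` of cycles `c`. -/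
def basicVelocities {d : ℕ} {V E : Type*} (s t : E → V) (δ : E → Fin d → ℤ) :
    Set (EuclideanSpace ℝ (Fin d)) :=
  {u | ∃ c : List E, IsCycleList s t c ∧ u = (c.length : ℝ)⁻¹ • toR (c.map δ).sum}

/-- The set of all velocities of trajectories. -/
def velocitySet {d : ℕ} {V E : Type*} (s t : E → V) (δ : E → Fin d → ℤ) :
    Set (EuclideanSpace ℝ (Fin d)) :=
  {u | ∃ f : ℕ → E, IsTrajectory s t f ∧ HasVelocity δ f u}

/-- `p` is a path from vertex `a` to vertex `b`. -/
def PathFrom {V E : Type*} (s t : E → V) (a b : V) (p : List E) : Prop :=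
  ∃ h : p ≠ [], p.Chain' (fun e f => t e = s f) ∧ s (p.head h) = a ∧ t (p.getLast h) = b

/-- Strong connectivity: any vertex can be reached from any vertex by a path. -/
def StronglyConnected {V E : Type*} (s t : E → V) : Prop :=
  ∀ v w : V, ∃ p : List E, PathFrom s t v w p

/-!
A trajectory's partial sums are sums along walks, and a walk splits into cycles plus a path
with distinct vertices, hence of length at most `|V|`. So a linear functional bounded by `u` on
the basic velocities `δ(c)/|c|` is bounded by `u` on every velocity, and by Hahn–Banach the
velocity set lies in the convex hull of the finitely many basic velocities; running around a
cycle realizes its basic velocity. If an invertible linear image of the velocity set were a ball,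
the velocity set would be convex, hence equal to that polytope, and the ball would be the convex
hull of finitely many points. But in dimension `≥ 2` the sphere is infinite and consists of
extreme points of the ball.
-/

open Finset Filter Topology Function Metric

theorem closedBall_zero_ne_convexHull_of_finite {X : Type*} [NormedAddCommGroup X]
    [NormedSpace ℝ X] [StrictConvexSpace ℝ X] (hX : 1 < Module.rank ℝ X) {r : ℝ}
    (hr : 0 < r) {F : Set X} (hF : F.Finite) : closedBall (0 : X) r ≠ convexHull ℝ F := by
  intro hball
  have : Nontrivial X := (rank_pos_iff_nontrivial (R := ℝ)).1 (zero_lt_one.trans hX)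
  have hsphere : (sphere (0 : X) r).Finite := by
    refine hF.subset ((StrictConvexSpace.sphere_subset_extremePoints_closedBall 0 hr.ne').trans ?_)
    rw [hball]
    exact extremePoints_convexHull_subset
  have hsub := (isPreconnected_sphere hX 0 r).isDiscrete_iff_subsingleton.1 hsphere.isDiscrete
  obtain ⟨x, hx⟩ := (NormedSpace.sphere_nonempty (x := (0 : X))).2 hr.le
  have hx' : -x ∈ sphere (0 : X) r := by simpa using hx
  have : x = 0 := by simpa [eq_neg_iff_add_eq_zero, ← two_smul ℝ x] using hsub hx hx'
  simp [this, hr.ne] at hx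

theorem Function.Periodic.sum_range_comp_add {M : Type*} [AddCancelCommMonoid M] {w : ℕ → M}
    {m : ℕ} (hw : Periodic w m) (j : ℕ) :
    ∑ k ∈ range m, w (j + k) = ∑ k ∈ range m, w k := by
  have hshift : ∑ k ∈ range j, w (m + k) = ∑ k ∈ range j, w k :=
    sum_congr rfl fun k _ => by rw [add_comm]; exact hw k
  have h := sum_range_add w j m
  rw [add_comm j m, sum_range_add, hshift, add_comm] at h
  exact (add_left_cancel h).symm

theorem Function.Periodic.tendsto_average_sum_range {X : Type*} [NormedAddCommGroup X]
    [NormedSpace ℝ X] {w : ℕ → X} {m : ℕ} (hw : Periodic w m) (hm : 0 < m) :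
    Tendsto (fun n : ℕ => (n : ℝ)⁻¹ • ∑ k ∈ range n, w k) atTop
      (𝓝 ((m : ℝ)⁻¹ • ∑ k ∈ range m, w k)) := by
  set T := ∑ k ∈ range m, w k
  have hm' : (m : ℝ) ≠ 0 := by positivity
  -- the deviation of the partial sums from linear growth is periodic, hence bounded
  set e : ℕ → X := fun n => ∑ k ∈ range n, w k - ((n : ℝ) / m) • T
  have he : Periodic e m := fun n => by
    simp only [e, sum_range_add, hw.sum_range_comp_add, Nat.cast_add, add_div, div_self hm',
      add_smul, one_smul]
    abel
  set B := ∑ r ∈ range m, ‖e r‖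
  have hB : ∀ n, ‖e n‖ ≤ B := fun n => by
    rw [← he.map_mod_nat n]
    exact single_le_sum (fun r _ => norm_nonneg (e r)) (mem_range.2 (Nat.mod_lt n hm))
  have hlim : Tendsto (fun n : ℕ => (n : ℝ)⁻¹ • e n) atTop (𝓝 0) := by
    refine squeeze_zero_norm (fun n => ?_) (tendsto_const_div_atTop_nhds_zero_nat B)
    rw [norm_smul, norm_inv, RCLike.norm_natCast, div_eq_inv_mul]
    exact mul_le_mul_of_nonneg_left (hB n) (by positivity)
  rw [← zero_add ((m : ℝ)⁻¹ • T)]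
  refine (hlim.add_const ((m : ℝ)⁻¹ • T)).congr' ?_
  filter_upwards [eventually_ne_atTop 0] with n hn
  have hn' : (n : ℝ) ≠ 0 := by exact_mod_cast hn
  simp only [e, smul_sub, smul_smul, div_eq_mul_inv]
  rw [inv_mul_cancel_left₀ hn', sub_add_cancel]

theorem toR_list_sum {d : ℕ} (l : List (Fin d → ℤ)) : toR l.sum = (l.map toR).sum :=
  map_list_sum (AddMonoidHom.mk' toR fun x y => by ext i; simp [toR]) l

theorem sum_Icc_one_eq_sum_range {M : Type*} [AddCommMonoid M] (v : ℕ → M) (n : ℕ) :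
    ∑ k ∈ Icc 1 n, v k = ∑ k ∈ range n, v (k + 1) := by
  rw [← Ico_add_one_right_eq_Icc, sum_Ico_eq_sum_range]
  simp [add_comm]

section Walks

variable {V E : Type*} (s t : E → V)

theorem exists_eq_append_of_not_nodup_map :
    ∀ {p : List E}, ¬(p.map s).Nodup →
      ∃ (a : List E) (e : E) (m : List E) (e' : E) (b : List E),
        p = a ++ e :: m ++ e' :: b ∧ s e = s e'
  | [], h => absurd List.nodup_nil h
  | x :: q, h => by
    rw [List.map_cons, List.nodup_cons, not_and_or, not_not] at h
    by_cases hx : s x ∈ q.map s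
    · obtain ⟨e', he', hse⟩ := List.mem_map.1 hx
      obtain ⟨m, b, rfl⟩ := List.append_of_mem he'
      exact ⟨[], x, m, e', b, by simp, hse.symm⟩
    · obtain ⟨a, e, m, e', b, rfl, hse⟩ :=
        exists_eq_append_of_not_nodup_map (h.resolve_left hx)
      exact ⟨x :: a, e, m, e', b, by simp, hse⟩

theorem finite_basicVelocities {d : ℕ} [Fintype V] [Finite E] (δ : E → Fin d → ℤ) :
    (basicVelocities s t δ).Finite := by
  refine ((List.finite_length_le E (Fintype.card V)).image
    fun c : List E => (c.length : ℝ)⁻¹ • toR (c.map δ).sum).subset ?_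
  rintro x ⟨c, ⟨-, -, -, hnd⟩, rfl⟩
  exact ⟨c, by simpa using hnd.length_le_card, rfl⟩

variable {s t}

theorem IsCycleList.length_pos {c : List E} (hc : IsCycleList s t c) : 0 < c.length :=
  List.length_pos_iff.2 hc.1

theorem exists_cycle_infix {p : List E} (hp : p.IsChain (fun e f => t e = s f))
    (hnd : ¬(p.map s).Nodup) : ∃ a c b : List E, p = a ++ c ++ b ∧ IsCycleList s t c := by
  obtain ⟨a, e, m, e', b, hpeq, hse⟩ := exists_eq_append_of_not_nodup_map s hnd
  subst hpeq
  have hem : (e :: m).IsChain (fun e f => t e = s f) := hp.infix ⟨a, e' :: b, by simp⟩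
  by_cases hnodup : ((e :: m).map s).Nodup
  · have hclose : t ((e :: m).getLast (List.cons_ne_nil _ _)) = s e' :=
      (hp.infix (l₁ := e :: m ++ [e']) ⟨a, b, by simp⟩).rel_getLast_head_of_append _
        (List.cons_ne_nil _ _)
    exact ⟨a, e :: m, e' :: b, by simp, List.cons_ne_nil _ _, hem, by simp [hclose, hse],
      hnodup⟩
  · obtain ⟨a₂, c, b₂, heq, hc⟩ := exists_cycle_infix hem hnodup
    exact ⟨a ++ a₂, c, b₂ ++ e' :: b, by rw [heq]; simp, hc⟩
termination_by p.length
decreasing_by rw [hpeq]; simp; omega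

theorem IsCycleList.isChain_append_of_append_append {a c b : List E} (hc : IsCycleList s t c)
    (h : (a ++ c ++ b).IsChain (fun e f => t e = s f)) :
    (a ++ b).IsChain (fun e f => t e = s f) := by
  obtain ⟨hne, -, hclose, -⟩ := hc
  refine h.left_of_append.left_of_append.append h.right_of_append fun x hx y hy => ?_
  have ha : a ≠ [] := by rintro rfl; simp at hx
  have hb : b ≠ [] := by rintro rfl; simp at hy
  rw [List.getLast?_eq_some_getLast ha, Option.mem_some_iff] at hx
  rw [List.head?_eq_some_head hb, Option.mem_some_iff] at hy
  subst hx hy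
  have hcb := (List.append_assoc a c b ▸ h).right_of_append
  calc t (a.getLast ha) = s (c.head hne) := h.left_of_append.rel_getLast_head_of_append ha hne
    _ = t (c.getLast hne) := hclose
    _ = s (b.head hb) := hcb.rel_getLast_head_of_append hne hb

theorem sum_map_le_of_isChain [Fintype V] {g : E → ℝ} {u M : ℝ} (hM0 : 0 ≤ M)
    (hM : ∀ e, g e ≤ M)
    (hcyc : ∀ c, IsCycleList s t c → (c.map g).sum ≤ u * c.length) {p : List E}
    (hp : p.IsChain (fun e f => t e = s f)) :
    (p.map g).sum ≤ u * p.length + (M + |u|) * Fintype.card V := by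
  by_cases hnd : (p.map s).Nodup
  · have hlen : (p.length : ℝ) ≤ Fintype.card V := by
      exact_mod_cast (List.length_map (f := s) ▸ hnd.length_le_card)
    have hsum : (p.map g).sum ≤ p.length * M := by
      simpa using List.sum_le_card_nsmul (p.map g) M (by simpa using fun e _ => hM e)
    nlinarith [neg_abs_le u, abs_nonneg u]
  · obtain ⟨a, c, b, hpeq, hc⟩ := exists_cycle_infix hp hnd
    subst hpeq
    have hab := sum_map_le_of_isChain hM0 hM hcyc (hc.isChain_append_of_append_append hp)
    have hcg := hcyc c hc
    simp only [List.map_append, List.sum_append, List.length_append, Nat.cast_add] at hab ⊢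
    linarith
termination_by p.length
decreasing_by rw [hpeq]; simp [hc.length_pos]

end Walks

section Cycles

variable {V E : Type*} {s t : E → V} {l : List E}

theorem IsCycleList.target_getElem (hl : IsCycleList s t l) {i : ℕ} (hi : i < l.length) :
    t l[i] = s (l[(i + 1) % l.length]'(Nat.mod_lt _ hl.length_pos)) := by
  obtain ⟨hne, hch, hclose, -⟩ := hl
  by_cases hlast : i + 1 < l.length
  · simp only [Nat.mod_eq_of_lt hlast]
    exact List.isChain_iff_getElem.1 hch i hlast
  · have hi' : i + 1 = l.length := by omega
    simp only [hi', Nat.mod_self]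
    rw [← List.head_eq_getElem_zero hne, hclose, List.getLast_eq_getElem]
    simp only [← hi', Nat.add_sub_cancel]

theorem IsCycleList.isTrajectory (hl : IsCycleList s t l) :
    IsTrajectory s t fun n => l[n % l.length]'(Nat.mod_lt _ hl.length_pos) := fun n => by
  rw [hl.target_getElem]
  simp only [Nat.mod_add_mod]

theorem IsCycleList.hasVelocity {d : ℕ} (δ : E → Fin d → ℤ) (hl : IsCycleList s t l) :
    HasVelocity δ (fun n => l[n % l.length]'(Nat.mod_lt _ hl.length_pos))
      ((l.length : ℝ)⁻¹ • toR (l.map δ).sum) := by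
  set v : ℕ → EuclideanSpace ℝ (Fin d) :=
    fun k => toR (δ (l[k % l.length]'(Nat.mod_lt _ hl.length_pos)))
  have hv : Periodic v l.length := fun k => by simp only [v, Nat.add_mod_right]
  have hsum : ∑ k ∈ range l.length, v (k + 1) = toR (l.map δ).sum := by
    calc ∑ k ∈ range l.length, v (k + 1) = ∑ k ∈ range l.length, v k := by
          simpa only [add_comm _ 1] using hv.sum_range_comp_add 1
      _ = ∑ i : Fin l.length, toR (δ l[(i : ℕ)]) := by
          rw [← Fin.sum_univ_eq_sum_range]
          simp only [v, Nat.mod_eq_of_lt (Fin.isLt _)]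
      _ = toR (l.map δ).sum := by
          rw [toR_list_sum, List.map_map]
          exact Fin.sum_univ_fun_getElem l (toR ∘ δ)
  unfold HasVelocity
  simp_rw [sum_Icc_one_eq_sum_range, ← hsum]
  exact (hv.add_const 1).tendsto_average_sum_range hl.length_pos

theorem basicVelocities_subset_velocitySet {d : ℕ} (δ : E → Fin d → ℤ) :
    basicVelocities s t δ ⊆ velocitySet s t δ := by
  rintro _ ⟨l, hl, rfl⟩
  exact ⟨_, hl.isTrajectory, hl.hasVelocity δ⟩

end Cycles

section Velocities

variable {V E : Type*} {s t : E → V} {d : ℕ} {δ : E → Fin d → ℤ}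

theorem IsTrajectory.isChain_ofFn {f : ℕ → E} (hf : IsTrajectory s t f) (n : ℕ) :
    (List.ofFn fun k : Fin n => f (k + 1)).IsChain (fun e e' => t e = s e') :=
  List.isChain_ofFn.2 fun i _ => (hf (i + 1)).symm

theorem le_of_mem_velocitySet [Fintype V] [Fintype E]
    (φ : EuclideanSpace ℝ (Fin d) →L[ℝ] ℝ) {u : ℝ}
    (hφ : ∀ b ∈ basicVelocities s t δ, φ b ≤ u) {x : EuclideanSpace ℝ (Fin d)}
    (hx : x ∈ velocitySet s t δ) : φ x ≤ u := by
  obtain ⟨f, hf, hfx⟩ := hx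
  set g : E → ℝ := fun e => φ (toR (δ e))
  have hg : ∀ l : List E, φ (toR (l.map δ).sum) = (l.map g).sum := fun l => by
    rw [toR_list_sum, map_list_sum, List.map_map, List.map_map]
    rfl
  have hcyc : ∀ c, IsCycleList s t c → (c.map g).sum ≤ u * c.length := fun c hc => by
    have hlen : (0 : ℝ) < c.length := by exact_mod_cast hc.length_pos
    have := hφ _ ⟨c, hc, rfl⟩
    rwa [map_smul, smul_eq_mul, hg, inv_mul_le_iff₀ hlen, mul_comm] at this
  set M := ∑ e, |g e|
  have hM : ∀ e, g e ≤ M := fun e =>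
    (le_abs_self _).trans (single_le_sum (fun e _ => abs_nonneg (g e)) (mem_univ e))
  set C := (M + |u|) * Fintype.card V
  have hpartial : ∀ n : ℕ, φ (∑ k ∈ Icc 1 n, toR (δ (f k))) ≤ u * n + C := fun n => by
    have hwalk := sum_map_le_of_isChain (sum_nonneg fun e _ => abs_nonneg (g e)) hM hcyc
      (hf.isChain_ofFn n)
    rw [List.length_ofFn, List.map_ofFn, List.sum_ofFn] at hwalk
    rwa [map_sum, sum_Icc_one_eq_sum_range, ← Fin.sum_univ_eq_sum_range (fun k => g (f (k + 1)))]
  have hlim : Tendsto (fun n : ℕ => u + C / n) atTop (𝓝 u) := by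
    simpa using (tendsto_const_div_atTop_nhds_zero_nat C).const_add u
  refine le_of_tendsto_of_tendsto ((φ.continuous.tendsto x).comp hfx) hlim ?_
  filter_upwards [eventually_gt_atTop 0] with n hn
  have hn' : (0 : ℝ) < n := by exact_mod_cast hn
  calc φ ((n : ℝ)⁻¹ • ∑ k ∈ Icc 1 n, toR (δ (f k)))
      = (n : ℝ)⁻¹ * φ (∑ k ∈ Icc 1 n, toR (δ (f k))) := by rw [map_smul, smul_eq_mul]
    _ ≤ (n : ℝ)⁻¹ * (u * n + C) := mul_le_mul_of_nonneg_left (hpartial n) (by positivity)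
    _ = u + C / n := by field_simp

theorem velocitySet_subset_convexHull [Fintype V] [Fintype E] :
    velocitySet s t δ ⊆ convexHull ℝ (basicVelocities s t δ) := by
  intro x hx
  by_contra hxF
  obtain ⟨φ, u, hφ, hux⟩ := geometric_hahn_banach_closed_point (convex_convexHull ℝ _)
    ((finite_basicVelocities s t δ).isClosed_convexHull (𝕜 := ℝ)) hxF
  exact (le_of_mem_velocitySet φ (fun b hb => (hφ b (subset_convexHull ℝ _ hb)).le) hx).not_gt
    hux

end Velocities

theorem stmt19_general {d : ℕ} (hd : 2 ≤ d) {V E : Type*} [Fintype V] [Fintype E]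
    (s t : E → V) (δ : E → Fin d → ℤ) :
    ¬ ∃ (L : EuclideanSpace ℝ (Fin d) →ₗ[ℝ] EuclideanSpace ℝ (Fin d)) (r : ℝ),
        Function.Bijective L ∧ 0 < r ∧
        L '' velocitySet s t δ = Metric.closedBall 0 r := by
  rintro ⟨L, r, hL, hr, hball⟩
  have hconvex : Convex ℝ (velocitySet s t δ) := by
    rw [← hL.1.preimage_image (velocitySet s t δ), hball]
    exact (convex_closedBall 0 r).linear_preimage L
  have hpolytope : velocitySet s t δ = convexHull ℝ (basicVelocities s t δ) :=
    velocitySet_subset_convexHull.antisymm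
      (convexHull_min (basicVelocities_subset_velocitySet δ) hconvex)
  have hrank : 1 < Module.rank ℝ (EuclideanSpace ℝ (Fin d)) := by
    rw [← Module.finrank_eq_rank, finrank_euclideanSpace_fin]
    exact_mod_cast hd
  refine closedBall_zero_ne_convexHull_of_finite hrank hr
    ((finite_basicVelocities s t δ).image L) ?_
  rw [← hball, hpolytope, L.image_convexHull]

/-- No-go theorem for isotropy: for `d ≥ 2` and `G` strongly connected, the set
of velocities of trajectories of a displacement graph is never ellipsoidal:
no invertible linear image of it is a closed Euclidean ball of positive radius. -/
theorem stmt19 {d : ℕ} (hd : 2 ≤ d) {V E : Type*} [Fintype V] [Nonempty V] [Fintype E]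
    (s t : E → V) (δ : E → Fin d → ℤ) (hconn : StronglyConnected s t) :
    ¬ ∃ (L : EuclideanSpace ℝ (Fin d) →ₗ[ℝ] EuclideanSpace ℝ (Fin d)) (r : ℝ),
        Function.Bijective L ∧ 0 < r ∧
        L '' velocitySet s t δ = Metric.closedBall 0 r :=
  stmt19_general hd s t δ
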